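/- Let 2 ≤ k ≤ n, λ ∈ Γ_k ⊂ ℝ^n, and ξ ∈ ℝ^n. Then Σ_{i ≠ j} σ_{k−2;ij}(λ) ξ_i ξ_j ≤ (1 − 1/k) · ( Σ_i σ_{k−1;i}(λ) ξ_i )² / σ_k(λ). (This is the quadratic-form inequality expressing the concavity of σ_k^{1/k} on Γ_k restricted to diagonal variations.) -/

import Mathlib

open scoped BigOperators Topology
open MeasureTheory

noncomputable section

abbrev E (n : ℕ) := EuclideanSpace ℝ (Fin n)

/-- the `m`-th elementary symmetric polynomial of `lam : Fin n → ℝ` -/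
def esym (n m : ℕ) (lam : Fin n → ℝ) : ℝ :=
  ∑ s ∈ Finset.univ.powersetCard m, ∏ i ∈ s, lam i

/-- the Gårding cone `Γ_k` -/
def GCone (n k : ℕ) : Set (Fin n → ℝ) :=
  {lam | ∀ m, 1 ≤ m → m ≤ k → 0 < esym n m lam}

/-- partial derivative `∂u/∂x_i` -/
def pd {n : ℕ} (u : E n → ℝ) (i : Fin n) (x : E n) : ℝ :=
  fderiv ℝ u x (EuclideanSpace.single i 1)

/-- gradient vector `Du` -/
def gradVec {n : ℕ} (u : E n → ℝ) (x : E n) : E n :=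
  WithLp.toLp 2 fun i => pd u i x

/-- Hessian matrix `D²u` -/
def hess {n : ℕ} (u : E n → ℝ) (x : E n) : Matrix (Fin n) (Fin n) ℝ :=
  Matrix.of fun i j => pd (pd u j) i x

/-- `w = √(1+|Du|²)` -/
def wgt {n : ℕ} (u : E n → ℝ) (x : E n) : ℝ :=
  Real.sqrt (1 + ∑ i, (pd u i x) ^ 2)

/-- the matrix `γ^{ij} = δ_{ij} - u_i u_j/(w(1+w))` -/
def gam {n : ℕ} (u : E n → ℝ) (x : E n) : Matrix (Fin n) (Fin n) ℝ :=
  Matrix.of fun i j =>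
    (if i = j then (1:ℝ) else 0) - pd u i x * pd u j x / (wgt u x * (1 + wgt u x))

/-- the curvature matrix `A = (1/w) γ D²u γ`, whose eigenvalues are `κ[M_u]` -/
def curvMat {n : ℕ} (u : E n → ℝ) (x : E n) : Matrix (Fin n) (Fin n) ℝ :=
  (wgt u x)⁻¹ • (gam u x * hess u x * gam u x)

/-- Frobenius norm of the second fundamental form `h_{ij} = u_{ij}/w` -/
def sffNorm {n : ℕ} (u : E n → ℝ) (x : E n) : ℝ :=
  Real.sqrt (∑ i, ∑ j, (hess u x i j / wgt u x) ^ 2)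

/-- the eigenvalue vector of the symmetric matrix `A` lies in `S` -/
def EigsIn {n : ℕ} (A : Matrix (Fin n) (Fin n) ℝ) (S : Set (Fin n → ℝ)) : Prop :=
  ∃ hA : A.IsHermitian, hA.eigenvalues ∈ S

/-- the eigenvalue vector of `A` lies in `S` and `σ_k` of it equals `c` -/
def SigmaEig {n : ℕ} (k : ℕ) (A : Matrix (Fin n) (Fin n) ℝ) (S : Set (Fin n → ℝ)) (c : ℝ) : Prop :=
  ∃ hA : A.IsHermitian, hA.eigenvalues ∈ S ∧ esym n k hA.eigenvalues = c

/-- `σ_m` with the `i`-th entry set equal to `0`, i.e. `σ_{m;i}` -/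
def esymOff (n m : ℕ) (lam : Fin n → ℝ) (i : Fin n) : ℝ :=
  esym n m (Function.update lam i 0)

/-- `σ_m` with the `i`-th and `j`-th entries set equal to `0`, i.e. `σ_{m;ij}` -/
def esymOff2 (n m : ℕ) (lam : Fin n → ℝ) (i j : Fin n) : ℝ :=
  esym n m (Function.update (Function.update lam i 0) j 0)

/-!
For `λ ∈ Γ_k` the polynomial `τ ↦ σ_k(ξ + τλ)` has only real roots (Gårding's hyperbolicity of
`σ_k`). In the direction `e = (1, …, 1)` this is Rolle's theorem: `σ_n(y + te) = ∏ (y_i + t)` and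
`d/dt σ_{m+1}(y + te) = (n - m) σ_m(y + te)`; since `σ_k(λ + te)` has positive coefficients, its
roots are negative. For general `ξ`, the roots in `τ` of `σ_k(uξ + ie + τλ)` can never be real,
stay bounded as `u` varies, and lie in the open lower half-plane at `u = 0`; by connectedness of `ℝ`
they stay there for every `u`. Rescaling, `σ_k(ξ + ise + τλ)` has all its roots in the lower
half-plane for `s > 0`, so `|σ_k(ξ + ise + wλ)| ≥ σ_k(λ) (Im w)^k` for `Im w > 0`, and letting
`s → 0` leaves no root of `σ_k(ξ + τλ)` off the real axis.

Writing `σ_k(ξ + τλ) = σ_k(λ) ∏ (τ - r_j)`, the two sums of the statement are the coefficients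
`-σ_k(λ) e_1(r)` and `σ_k(λ) e_2(r)` of `τ^{k-1}` and `τ^{k-2}`, and the inequality is Newton's
`2 e_2 ≤ (1 - 1/k) e_1²`, i.e. Cauchy–Schwarz `(∑ r_j)² ≤ k ∑ r_j²`.
-/

open Polynomial Finset

section EsymVec

variable {ι R S : Type*} [Fintype ι] [CommRing R] [CommRing S]

/-- On `Fin n → ℝ` this is `esym n k` by definition. -/
def esymVec (k : ℕ) (x : ι → R) : R :=
  ∑ T ∈ univ.powersetCard k, ∏ i ∈ T, x i

theorem map_esymVec (f : R →+* S) (k : ℕ) (x : ι → R) :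
    f (esymVec k x) = esymVec k (f ∘ x) := by
  simp [esymVec, map_sum, map_prod]

theorem esymVec_zero (x : ι → R) : esymVec 0 x = 1 := by
  simp [esymVec]

theorem esymVec_one (k : ℕ) : esymVec k (1 : ι → R) = (Fintype.card ι).choose k := by
  simp [esymVec, card_powersetCard]

theorem esymVec_smul (k : ℕ) (c : R) (x : ι → R) :
    esymVec k (c • x) = c ^ k * esymVec k x := by
  rw [esymVec, esymVec, mul_sum]
  refine sum_congr rfl fun T hT => ?_
  rw [← (mem_powersetCard.mp hT).2, ← prod_const, ← prod_mul_distrib]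
  rfl

theorem continuous_esymVec [TopologicalSpace R] [IsTopologicalRing R] (k : ℕ) :
    Continuous (esymVec (ι := ι) (R := R) k) := by
  unfold esymVec
  fun_prop

def esymLine (k : ℕ) (a b : ι → R) : R[X] :=
  esymVec k fun i => C (a i) + C (b i) * X

theorem eval_esymLine (k : ℕ) (a b : ι → R) (t : R) :
    (esymLine k a b).eval t = esymVec k (a + t • b) := by
  rw [esymLine, ← coe_evalRingHom, map_esymVec]
  congr 1
  ext i
  simp only [Function.comp_apply, coe_evalRingHom, eval_add, eval_mul, eval_C, eval_X,
    Pi.add_apply, Pi.smul_apply, smul_eq_mul]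
  ring

theorem map_esymLine (f : R →+* S) (k : ℕ) (a b : ι → R) :
    (esymLine k a b).map f = esymLine k (f ∘ a) (f ∘ b) := by
  rw [esymLine, ← coe_mapRingHom, map_esymVec]
  congr 1
  ext i : 1
  simp only [Function.comp_apply, coe_mapRingHom, Polynomial.map_add, Polynomial.map_mul, map_C,
    map_X]

theorem natDegree_esymLine_le (k : ℕ) (a b : ι → R) : (esymLine k a b).natDegree ≤ k := by
  refine natDegree_sum_le_of_forall_le _ _ fun T hT => (natDegree_prod_le _ _).trans ?_
  refine (sum_le_sum fun i _ => ?_).trans_eq (b := ∑ _i ∈ T, 1) ?_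
  · rw [add_comm]
    exact natDegree_linear_le
  · rw [sum_const, smul_eq_mul, mul_one, (mem_powersetCard.mp hT).2]

end EsymVec

theorem ofReal_esymVec {ι : Type*} [Fintype ι] (k : ℕ) (x : ι → ℝ) :
    ((esymVec k x : ℝ) : ℂ) = esymVec k (Complex.ofReal ∘ x) :=
  map_esymVec Complex.ofRealHom k x

theorem exists_pos_mul_norm_le_of_esymVec_eq_zero {ι 𝕜 : Type*} [Fintype ι] [NormedField 𝕜]
    {k : ℕ} {Λ : ι → 𝕜} (hΛ : esymVec k Λ ≠ 0) :
    ∃ δ > 0, ∀ (a : ι → 𝕜) (τ : 𝕜), esymVec k (a + τ • Λ) = 0 → δ * ‖τ‖ ≤ ‖a‖ := by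
  have hcont : Continuous fun v : ι → 𝕜 => esymVec k (v + Λ) :=
    (continuous_esymVec k).comp (continuous_id.add continuous_const)
  obtain ⟨δ, hδ, hball⟩ := Metric.eventually_nhds_iff.mp
    ((hcont.tendsto 0).eventually_ne (by simpa using hΛ))
  refine ⟨δ, hδ, fun a τ hτ => ?_⟩
  rcases eq_or_ne τ 0 with rfl | hτ0
  · simp
  -- `σ_k` is homogeneous, so `τ⁻¹ • a` cannot be small.
  rw [show a + τ • Λ = τ • (τ⁻¹ • a + Λ) by rw [smul_add, smul_inv_smul₀ hτ0],
    esymVec_smul] at hτ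
  have hfar : ¬ dist (τ⁻¹ • a) 0 < δ := fun h =>
    hball h ((mul_eq_zero.mp hτ).resolve_left (pow_ne_zero k hτ0))
  rw [dist_zero_right, norm_smul, norm_inv, not_lt] at hfar
  calc δ * ‖τ‖ ≤ ‖τ‖⁻¹ * ‖a‖ * ‖τ‖ := by gcongr
    _ = ‖a‖ := by field_simp [norm_ne_zero_iff.mpr hτ0]

section Combinatorics

variable {ι M : Type*} [DecidableEq ι] [AddCommMonoid M]

theorem sum_powersetCard_sum_powersetCard_sdiff [Fintype ι] {m k : ℕ} (hmk : m ≤ k)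
    (F : Finset ι → Finset ι → M) :
    ∑ S ∈ univ.powersetCard k, ∑ U ∈ S.powersetCard m, F U (S \ U)
      = ∑ U ∈ univ.powersetCard m, ∑ T ∈ (univ \ U).powersetCard (k - m), F U T := by
  rw [sum_comm' (t' := univ.powersetCard m) (s' := fun U => {S ∈ univ.powersetCard k | U ⊆ S})
    (by intro S U; simp only [mem_powersetCard, mem_filter, subset_univ, true_and]; tauto)]
  refine sum_congr rfl fun U hU => ?_
  obtain rfl := (mem_powersetCard.mp hU).2
  have hdisj : ∀ T ∈ (univ \ U).powersetCard (k - #U), (T ∪ U) \ U = T := fun T hT =>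
    union_sdiff_cancel_right (disjoint_of_subset_left (mem_powersetCard.mp hT).1
      disjoint_sdiff_self_left)
  rw [filter_powersetCard_subset U univ k (subset_univ U) hmk, sum_image]
  · exact sum_congr rfl fun T hT => by rw [hdisj T hT]
  · intro T hT T' hT' h
    rw [← hdisj T hT, ← hdisj T' hT']
    exact congrArg (· \ U) h

theorem sum_sum_erase_pair_eq_two_nsmul [Fintype ι] (G : Finset ι → M) :
    ∑ i, ∑ j ∈ univ.erase i, G {i, j} = 2 • ∑ U ∈ univ.powersetCard 2, G U := by
  have hpairs : ∀ i : ι, (univ.erase i).image (fun j => ({i, j} : Finset ι))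
      = {U ∈ (univ : Finset ι).powersetCard 2 | i ∈ U} := by
    intro i
    ext U
    simp only [mem_image, mem_erase, mem_univ, and_true, mem_filter, mem_powersetCard,
      subset_univ, true_and, card_eq_two]
    constructor
    · rintro ⟨j, hji, rfl⟩
      exact ⟨⟨i, j, hji.symm, rfl⟩, mem_insert_self i _⟩
    · rintro ⟨⟨x, y, hxy, rfl⟩, hi⟩
      rcases mem_insert.mp hi with rfl | hi
      · exact ⟨y, hxy.symm, rfl⟩
      · rw [mem_singleton.mp hi]
        exact ⟨x, hxy, pair_comm _ _⟩
  have hinj : ∀ i : ι, Set.InjOn (fun j => ({i, j} : Finset ι)) (univ.erase i) := by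
    intro i j hj j' _ h
    have h' : ({i, j} : Finset ι) = {i, j'} := h
    have : j ∈ ({i, j'} : Finset ι) := h' ▸ by simp
    simpa [(mem_erase.mp (mem_coe.mp hj)).1] using this
  calc ∑ i, ∑ j ∈ univ.erase i, G {i, j}
      = ∑ i, ∑ U ∈ univ.powersetCard 2 with i ∈ U, G U := by
        refine sum_congr rfl fun i _ => ?_
        rw [← hpairs, sum_image (hinj i)]
    _ = ∑ U ∈ univ.powersetCard 2, ∑ i ∈ U, G U := by
        rw [sum_comm' (t' := univ.powersetCard 2) (s' := fun U => U)]
        intro i U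
        simp [and_comm]
    _ = 2 • ∑ U ∈ univ.powersetCard 2, G U := by
        rw [smul_sum]
        refine sum_congr rfl fun U hU => ?_
        rw [sum_const, (mem_powersetCard.mp hU).2]

theorem sum_powersetCard_prod_update_zero {R : Type*} [CommRing R] (W : Finset ι) (m : ℕ)
    (g : ι → R) (i : ι) :
    ∑ T ∈ W.powersetCard m, ∏ l ∈ T, Function.update g i 0 l
      = ∑ T ∈ (W.erase i).powersetCard m, ∏ l ∈ T, g l := by
  calc ∑ T ∈ W.powersetCard m, ∏ l ∈ T, Function.update g i 0 l
      = ∑ T ∈ W.powersetCard m with i ∉ T, ∏ l ∈ T, g l := by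
        rw [sum_filter]
        refine sum_congr rfl fun T _ => ?_
        split_ifs with hi
        · rw [prod_update_of_mem hi, zero_mul]
        · exact prod_update_of_notMem hi g 0
    _ = ∑ T ∈ (W.erase i).powersetCard m, ∏ l ∈ T, g l := by
        congr 1
        ext T
        simp only [mem_filter, mem_powersetCard, subset_erase]
        tauto

end Combinatorics

theorem coeff_prod_C_add_C_mul_X {ι R : Type*} [DecidableEq ι] [CommRing R] (S : Finset ι)
    (a b : ι → R) (j : ℕ) :
    (∏ i ∈ S, (C (a i) + C (b i) * X)).coeff j
      = ∑ U ∈ S.powerset with #(S \ U) = j, (∏ i ∈ U, a i) * ∏ i ∈ S \ U, b i := by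
  have hterm : ∀ U ∈ S.powerset, (∏ i ∈ U, C (a i)) * ∏ i ∈ S \ U, C (b i) * X
      = C ((∏ i ∈ U, a i) * ∏ i ∈ S \ U, b i) * X ^ #(S \ U) := by
    intro U _
    rw [prod_mul_distrib, prod_const, map_mul, map_prod, map_prod, mul_assoc]
  rw [prod_add, sum_congr rfl hterm, finsetSum_coeff]
  simp_rw [coeff_C_mul_X_pow, ← sum_filter]
  exact sum_congr (filter_congr fun _ _ => eq_comm) fun _ _ => rfl

section Coefficients

variable {ι R : Type*} [Fintype ι] [DecidableEq ι] [CommRing R]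

theorem coeff_esymLine (a b : ι → R) {m k : ℕ} (hmk : m ≤ k) :
    (esymLine k a b).coeff (k - m)
      = ∑ U ∈ univ.powersetCard m, (∏ i ∈ U, a i) * ∑ T ∈ (univ \ U).powersetCard (k - m),
          ∏ i ∈ T, b i := by
  simp_rw [esymLine, esymVec, finsetSum_coeff, coeff_prod_C_add_C_mul_X, mul_sum]
  rw [← sum_powersetCard_sum_powersetCard_sdiff hmk]
  refine sum_congr rfl fun S hS => sum_congr ?_ fun _ _ => rfl
  ext U
  have hSk := (mem_powersetCard.mp hS).2
  simp only [mem_filter, mem_powerset, mem_powersetCard, and_congr_right_iff]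
  intro hUS
  rw [card_sdiff_of_subset hUS]
  have := card_le_card hUS
  omega

theorem coeff_esymLine_self (k : ℕ) (a b : ι → R) : (esymLine k a b).coeff k = esymVec k b := by
  simpa [esymVec] using coeff_esymLine a b (Nat.zero_le k)

theorem natDegree_esymLine {k : ℕ} (a : ι → R) {b : ι → R} (hb : esymVec k b ≠ 0) :
    (esymLine k a b).natDegree = k :=
  le_antisymm (natDegree_esymLine_le k a b)
    (le_natDegree_of_ne_zero (by rwa [coeff_esymLine_self]))

theorem leadingCoeff_esymLine {k : ℕ} (a : ι → R) {b : ι → R} (hb : esymVec k b ≠ 0) :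
    (esymLine k a b).leadingCoeff = esymVec k b := by
  rw [leadingCoeff, natDegree_esymLine a hb, coeff_esymLine_self]

theorem coeff_esymLine_one (a : ι → R) {m k : ℕ} (hmk : m ≤ k) :
    (esymLine k a 1).coeff (k - m) = ((Fintype.card ι - m).choose (k - m) : R) * esymVec m a := by
  rw [coeff_esymLine a 1 hmk, esymVec, mul_sum]
  refine sum_congr rfl fun U hU => ?_
  simp [card_powersetCard, card_sdiff_of_subset (subset_univ U), (mem_powersetCard.mp hU).2,
    mul_comm]

theorem derivative_esymLine_one (a : ι → R) (m : ℕ) :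
    derivative (esymLine (m + 1) a 1) = C ((Fintype.card ι - m : ℕ) : R) * esymLine m a 1 := by
  ext j
  rw [coeff_derivative, coeff_C_mul]
  rcases le_or_gt j m with hjm | hmj
  · obtain ⟨l, hl, rfl⟩ : ∃ l ≤ m, j = m - l := ⟨m - j, Nat.sub_le m j, by omega⟩
    rw [show m - l + 1 = m + 1 - l by omega, coeff_esymLine_one a (by omega : l ≤ m + 1),
      coeff_esymLine_one a hl, show m + 1 - l = m - l + 1 by omega]
    have key := Nat.choose_succ_right_eq (Fintype.card ι - l) (m - l)
    rw [show Fintype.card ι - l - (m - l) = Fintype.card ι - m by omega] at key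
    have key' := congrArg (Nat.cast (R := R)) key
    push_cast at key' ⊢
    linear_combination esymVec l a * key'
  · rw [coeff_eq_zero_of_natDegree_lt ((natDegree_esymLine_le m a 1).trans_lt hmj),
      coeff_eq_zero_of_natDegree_lt ((natDegree_esymLine_le (m + 1) a 1).trans_lt (by omega)),
      zero_mul, mul_zero]

end Coefficients

theorem esymOff_eq (n m : ℕ) (lam : Fin n → ℝ) (i : Fin n) :
    esymOff n m lam i = ∑ T ∈ (univ.erase i).powersetCard m, ∏ l ∈ T, lam l := by
  rw [esymOff, esym, sum_powersetCard_prod_update_zero]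

theorem esymOff2_eq (n m : ℕ) (lam : Fin n → ℝ) (i j : Fin n) :
    esymOff2 n m lam i j = ∑ T ∈ ((univ.erase i).erase j).powersetCard m, ∏ l ∈ T, lam l := by
  rw [esymOff2, esym, sum_powersetCard_prod_update_zero, sum_powersetCard_prod_update_zero,
    erase_right_comm]

theorem coeff_esymLine_sub_one (n k : ℕ) (hk : 1 ≤ k) (ξ lam : Fin n → ℝ) :
    (esymLine k ξ lam).coeff (k - 1) = ∑ i, esymOff n (k - 1) lam i * ξ i := by
  rw [coeff_esymLine ξ lam hk, powersetCard_one, sum_map]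
  refine sum_congr rfl fun i _ => ?_
  simp [esymOff_eq, sdiff_singleton_eq_erase, mul_comm]

theorem two_mul_coeff_esymLine_sub_two (n k : ℕ) (hk : 2 ≤ k) (ξ lam : Fin n → ℝ) :
    2 * (esymLine k ξ lam).coeff (k - 2)
      = ∑ i, ∑ j ∈ univ.erase i, esymOff2 n (k - 2) lam i j * ξ i * ξ j := by
  rw [coeff_esymLine ξ lam hk, two_mul, ← two_nsmul, ← sum_sum_erase_pair_eq_two_nsmul]
  refine sum_congr rfl fun i _ => sum_congr rfl fun j hj => ?_
  rw [prod_pair (ne_of_mem_erase hj).symm, esymOff2_eq, ← sdiff_singleton_eq_erase,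
    ← sdiff_singleton_eq_erase, sdiff_sdiff_left, sup_eq_union, ← insert_eq]
  ring

theorem splits_derivative_of_splits {p : ℝ[X]} (hp : p.Splits) : p.derivative.Splits := by
  rw [splits_iff_card_roots] at hp ⊢
  have h1 := card_roots_le_derivative p
  have h2 := card_roots' (derivative p)
  have h3 := natDegree_derivative_le p
  omega

section DirectionOne

variable {ι : Type*} [Fintype ι] [DecidableEq ι]

theorem esymLine_one_ne_zero (y : ι → ℝ) {k : ℕ} (hk : k ≤ Fintype.card ι) :
    esymLine k y 1 ≠ 0 := by
  intro h
  have := coeff_esymLine_one y (Nat.zero_le k)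
  rw [h, coeff_zero, esymVec_zero, mul_one, Nat.sub_zero, Nat.sub_zero] at this
  exact (Nat.choose_pos hk).ne' (by exact_mod_cast this.symm)

theorem splits_esymLine_one (y : ι → ℝ) {k : ℕ} (hk : k ≤ Fintype.card ι) :
    (esymLine k y 1).Splits := by
  obtain ⟨d, hd⟩ := Nat.exists_eq_add_of_le hk
  induction d generalizing k with
  | zero =>
    have hall : univ.powersetCard k = {(univ : Finset ι)} := by
      rw [show k = #(univ : Finset ι) by rw [card_univ]; omega, powersetCard_self]
    rw [esymLine, esymVec, hall, sum_singleton]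
    exact Splits.prod fun i _ => by simp [add_comm, Splits.X_add_C]
  | succ d ih =>
    have hsplit := splits_derivative_of_splits (ih (k := k + 1) (by omega) (by omega))
    rw [derivative_esymLine_one] at hsplit
    have hc : ((Fintype.card ι - k : ℕ) : ℝ) ≠ 0 := by
      exact_mod_cast (show Fintype.card ι - k ≠ 0 by omega)
    have := hsplit.C_mul ((Fintype.card ι - k : ℕ) : ℝ)⁻¹
    rwa [← mul_assoc, ← C_mul, inv_mul_cancel₀ hc, C_1, one_mul] at this

theorem exists_real_eq_of_esymVec_add_smul_one_eq_zero (y : ι → ℝ) {k : ℕ}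
    (hk : k ≤ Fintype.card ι) {z : ℂ} (hz : esymVec k (Complex.ofReal ∘ y + z • 1) = 0) :
    ∃ r : ℝ, (r : ℂ) = z := by
  have hroot : ((esymLine k y 1).map Complex.ofRealHom).IsRoot z := by
    rw [IsRoot, map_esymLine, eval_esymLine, ← hz]
    rfl
  exact (splits_esymLine_one y hk).mem_range_of_isRoot (esymLine_one_ne_zero y hk) hroot

theorem eval_esymLine_one_pos (lam : ι → ℝ) {k : ℕ} (hlam : ∀ m ≤ k, 0 < esymVec m lam) {t : ℝ}
    (ht : 0 ≤ t) : 0 < (esymLine k lam 1).eval t := by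
  rw [eval_eq_sum_range' ((natDegree_esymLine_le k lam 1).trans_lt (Nat.lt_succ_self k)),
    ← sum_range_reflect]
  have hterm : ∀ m ∈ range (k + 1),
      (esymLine k lam 1).coeff (k + 1 - 1 - m) * t ^ (k + 1 - 1 - m)
        = ((Fintype.card ι - m).choose (k - m) : ℝ) * esymVec m lam * t ^ (k - m) := by
    intro m hm
    rw [Nat.add_sub_cancel, coeff_esymLine_one lam (Nat.lt_succ_iff.mp (mem_range.mp hm))]
  rw [sum_congr rfl hterm]
  refine sum_pos' (fun m hm => ?_) ⟨k, self_mem_range_succ k, ?_⟩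
  · have := hlam m (Nat.lt_succ_iff.mp (mem_range.mp hm))
    positivity
  · simpa using hlam k le_rfl

theorem exists_neg_eq_of_esymVec_add_smul_one_eq_zero {lam : ι → ℝ} {k : ℕ}
    (hk : k ≤ Fintype.card ι) (hlam : ∀ m ≤ k, 0 < esymVec m lam) {z : ℂ}
    (hz : esymVec k (Complex.ofReal ∘ lam + z • 1) = 0) : ∃ r : ℝ, r < 0 ∧ (r : ℂ) = z := by
  obtain ⟨r, rfl⟩ := exists_real_eq_of_esymVec_add_smul_one_eq_zero lam hk hz
  refine ⟨r, lt_of_not_ge fun hr => (eval_esymLine_one_pos lam hlam hr).ne' ?_, rfl⟩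
  rw [eval_esymLine, ← Complex.ofReal_inj, ofReal_esymVec, Complex.ofReal_zero, ← hz]
  congr 1
  ext i
  simp

end DirectionOne

theorem pow_card_le_norm_prod {K : Type*} [NormedField K] {s : Multiset K} {a : ℝ}
    (ha : 0 ≤ a) (h : ∀ x ∈ s, a ≤ ‖x‖) : a ^ Multiset.card s ≤ ‖s.prod‖ := by
  induction s using Multiset.induction_on with
  | empty => simp
  | cons x s ih =>
    rw [Multiset.prod_cons, Multiset.card_cons, norm_mul, pow_succ']
    exact mul_le_mul (h x (Multiset.mem_cons_self x s))
      (ih fun y hy => h y (Multiset.mem_cons_of_mem hy)) (by positivity) (norm_nonneg x)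

theorem leadingCoeff_mul_im_pow_le_norm_eval {p : ℂ[X]} (hroots : ∀ z, p.IsRoot z → z.im ≤ 0)
    {w : ℂ} (hw : 0 ≤ w.im) : ‖p.leadingCoeff‖ * w.im ^ p.natDegree ≤ ‖p.eval w‖ := by
  have hsplit := IsAlgClosed.splits p
  rw [hsplit.eval_eq_prod_roots, norm_mul, hsplit.natDegree_eq_card_roots,
    ← Multiset.card_map (w - ·)]
  refine mul_le_mul_of_nonneg_left (pow_card_le_norm_prod hw fun x hx => ?_) (norm_nonneg _)
  obtain ⟨z, hz, rfl⟩ := Multiset.mem_map.mp hx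
  have hzim := hroots z (isRoot_of_mem_roots hz)
  calc w.im ≤ (w - z).im := by rw [Complex.sub_im]; linarith
    _ ≤ ‖w - z‖ := (le_abs_self _).trans (Complex.abs_im_le_norm _)

theorem isClosed_setOf_exists_esymVec_eq_zero_im_nonneg {ι : Type*} [Fintype ι] {k : ℕ}
    {Λ : ι → ℂ} (hΛ : esymVec k Λ ≠ 0) {A : ℝ → ι → ℂ} (hA : Continuous A) :
    IsClosed {u | ∃ τ : ℂ, 0 ≤ τ.im ∧ esymVec k (A u + τ • Λ) = 0} := by
  -- The roots are locally bounded, so a subsequence converges to a root.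
  refine IsSeqClosed.isClosed fun us u₀ hus hlim => ?_
  choose τs hτs_im hτs using hus
  obtain ⟨δ, hδ, hbound⟩ := exists_pos_mul_norm_le_of_esymVec_eq_zero hΛ
  obtain ⟨M, hM⟩ := ((hA.tendsto u₀).comp hlim).norm.bddAbove_range
  have hτs_mem : ∀ m, τs m ∈ Metric.closedBall (0 : ℂ) (M / δ) := fun m => by
    rw [Metric.mem_closedBall, dist_zero_right, le_div_iff₀ hδ, mul_comm]
    exact (hbound _ _ (hτs m)).trans (hM (Set.mem_range_self m))
  obtain ⟨τ₀, -, φ, hφ, hτlim⟩ := tendsto_subseq_of_bounded Metric.isBounded_closedBall hτs_mem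
  have hEcont : Continuous fun p : ℝ × ℂ => esymVec k (A p.1 + p.2 • Λ) :=
    (continuous_esymVec k).comp
      ((hA.comp continuous_fst).add (continuous_snd.smul continuous_const))
  have hpair : Filter.Tendsto (fun m => (us (φ m), τs (φ m))) Filter.atTop (𝓝 (u₀, τ₀)) :=
    (hlim.comp hφ.tendsto_atTop).prodMk_nhds hτlim
  refine ⟨τ₀, ge_of_tendsto' ((Complex.continuous_im.tendsto τ₀).comp hτlim)
    fun m => hτs_im (φ m), ?_⟩
  exact tendsto_nhds_unique ((hEcont.tendsto _).comp hpair) (by simp [Function.comp_def, hτs])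

section Hyperbolicity

variable {ι : Type*} [Fintype ι] [DecidableEq ι]

theorem norm_esymVec_mul_im_pow_le {k : ℕ} {a Λ : ι → ℂ} (hΛ : esymVec k Λ ≠ 0)
    (hroots : ∀ τ : ℂ, esymVec k (a + τ • Λ) = 0 → τ.im ≤ 0) {w : ℂ} (hw : 0 ≤ w.im) :
    ‖esymVec k Λ‖ * w.im ^ k ≤ ‖esymVec k (a + w • Λ)‖ := by
  have := leadingCoeff_mul_im_pow_le_norm_eval (p := esymLine k a Λ)
    (fun z hz => hroots z (by rwa [IsRoot, eval_esymLine] at hz)) hw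
  rwa [leadingCoeff_esymLine a hΛ, natDegree_esymLine a hΛ, eval_esymLine] at this

theorem isOpen_setOf_exists_esymVec_eq_zero_im_nonneg {k : ℕ} {Λ : ι → ℂ}
    (hΛ : esymVec k Λ ≠ 0) {A : ℝ → ι → ℂ} (hA : Continuous A)
    (hreal : ∀ (u t : ℝ), esymVec k (A u + (t : ℂ) • Λ) ≠ 0) :
    IsOpen {u | ∃ τ : ℂ, 0 ≤ τ.im ∧ esymVec k (A u + τ • Λ) = 0} := by
  have hcompl : {u | ∃ τ : ℂ, 0 ≤ τ.im ∧ esymVec k (A u + τ • Λ) = 0}ᶜ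
      = ⋂ w ∈ {w : ℂ | 0 < w.im}, {u | ‖esymVec k Λ‖ * w.im ^ k ≤ ‖esymVec k (A u + w • Λ)‖} := by
    ext u
    simp only [Set.mem_compl_iff, Set.mem_ofPred_eq, not_exists, not_and, Set.mem_iInter]
    constructor
    · intro hu w hw
      exact norm_esymVec_mul_im_pow_le hΛ (fun τ hτ => not_lt.mp fun h => hu τ h.le hτ) hw.le
    · intro hu τ hτim hτ
      rcases hτim.lt_or_eq with hpos | hzero
      · have := hu τ hpos
        rw [hτ, norm_zero] at this
        have : 0 < ‖esymVec k Λ‖ * τ.im ^ k := by positivity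
        linarith
      · refine hreal u τ.re ?_
        rwa [show (τ.re : ℂ) = τ from Complex.ext rfl (by simp [hzero])]
  rw [← isClosed_compl_iff, hcompl]
  exact isClosed_biInter fun w _ => isClosed_le continuous_const
    ((continuous_esymVec k).comp (hA.add continuous_const)).norm

theorem im_neg_of_esymVec_eq_zero_of_path {k : ℕ} {Λ : ι → ℂ} (hΛ : esymVec k Λ ≠ 0)
    {A : ℝ → ι → ℂ} (hA : Continuous A)
    (hreal : ∀ (u t : ℝ), esymVec k (A u + (t : ℂ) • Λ) ≠ 0)
    (hstart : ∀ τ : ℂ, esymVec k (A 0 + τ • Λ) = 0 → τ.im < 0)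
    (u : ℝ) {τ : ℂ} (hτ : esymVec k (A u + τ • Λ) = 0) : τ.im < 0 := by
  have hempty := (isClopen_iff.mp ⟨isClosed_setOf_exists_esymVec_eq_zero_im_nonneg hΛ hA,
    isOpen_setOf_exists_esymVec_eq_zero_im_nonneg hΛ hA hreal⟩).resolve_right fun huniv => by
      obtain ⟨τ, hτim, hτ⟩ := huniv ▸ Set.mem_univ (0 : ℝ)
      exact (hstart τ hτ).not_ge hτim
  exact lt_of_not_ge fun h => (Set.eq_empty_iff_forall_notMem.mp hempty u) ⟨τ, h, hτ⟩

theorem im_neg_of_esymVec_add_I_smul_one_add_smul_eq_zero {k : ℕ} (hk : k ≤ Fintype.card ι)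
    {lam : ι → ℝ} (hlam : ∀ m ≤ k, 0 < esymVec m lam) (y : ι → ℝ) {τ : ℂ}
    (hτ : esymVec k (Complex.ofReal ∘ y + Complex.I • 1 + τ • (Complex.ofReal ∘ lam)) = 0) :
    τ.im < 0 := by
  have hΛ : esymVec k (Complex.ofReal ∘ lam) ≠ 0 := by
    rw [← ofReal_esymVec]
    exact_mod_cast (hlam k le_rfl).ne'
  refine im_neg_of_esymVec_eq_zero_of_path (A := fun u => (u : ℂ) • (Complex.ofReal ∘ y) +
    Complex.I • 1) hΛ (by fun_prop) (fun u t h => ?_) (fun τ hτ => ?_) 1 (by simpa using hτ)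
  · obtain ⟨r, hr⟩ := exists_real_eq_of_esymVec_add_smul_one_eq_zero (u • y + t • lam) hk
      (z := Complex.I) (by
        rw [← h]
        congr 1
        ext i
        simp only [Pi.add_apply, Function.comp_apply, Pi.smul_apply, smul_eq_mul,
          Complex.ofReal_add, Complex.ofReal_mul, Pi.one_apply, mul_one]
        ring)
    simpa using congrArg Complex.im hr
  · rw [Complex.ofReal_zero, zero_smul, zero_add] at hτ
    rcases eq_or_ne τ 0 with rfl | hτ0
    · rw [zero_smul, add_zero, esymVec_smul, esymVec_one] at hτ
      have : ((Fintype.card ι).choose k : ℂ) ≠ 0 := by exact_mod_cast (Nat.choose_pos hk).ne'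
      exact absurd hτ (mul_ne_zero (pow_ne_zero k Complex.I_ne_zero) this)
    -- `σ_k(i e + τ λ) = τ^k σ_k(λ + (i / τ) e)`, and the roots of `σ_k(λ + z e)` are negative.
    rw [show Complex.I • 1 + τ • (Complex.ofReal ∘ lam)
        = τ • (Complex.ofReal ∘ lam + (Complex.I / τ) • 1) by
          ext i
          simp only [Pi.add_apply, Pi.smul_apply, Pi.one_apply, smul_eq_mul, mul_one,
            Function.comp_apply]
          field_simp
          ring,
      esymVec_smul] at hτ
    obtain ⟨r, hr, hrτ⟩ := exists_neg_eq_of_esymVec_add_smul_one_eq_zero hk hlam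
      ((mul_eq_zero.mp hτ).resolve_left (pow_ne_zero k hτ0))
    rw [show τ = Complex.I / r by rw [hrτ, div_div_cancel₀ Complex.I_ne_zero],
      Complex.div_ofReal_im, Complex.I_im]
    exact one_div_neg.mpr hr

theorem not_im_pos_of_esymVec_add_smul_eq_zero {k : ℕ} (hk : k ≤ Fintype.card ι) {lam : ι → ℝ}
    (hlam : ∀ m ≤ k, 0 < esymVec m lam) (ξ : ι → ℝ) {z : ℂ}
    (hz : esymVec k (Complex.ofReal ∘ ξ + z • (Complex.ofReal ∘ lam)) = 0) : ¬ 0 < z.im := by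
  intro hzim
  set Λ : ι → ℂ := Complex.ofReal ∘ lam
  have hΛ : esymVec k Λ ≠ 0 := by
    rw [← ofReal_esymVec]
    exact_mod_cast (hlam k le_rfl).ne'
  set f : ℝ → ℝ := fun s => ‖esymVec k (Complex.ofReal ∘ ξ + (s * Complex.I) • 1 + z • Λ)‖
  have hbound : ∀ s ∈ Set.Ioi (0 : ℝ), ‖esymVec k Λ‖ * z.im ^ k ≤ f s := by
    intro s hs
    have hs' : (s : ℂ) ≠ 0 := by exact_mod_cast (Set.mem_Ioi.mp hs).ne'
    refine norm_esymVec_mul_im_pow_le hΛ (fun τ hτ => ?_) hzim.le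
    rw [show Complex.ofReal ∘ ξ + (s * Complex.I) • 1 + τ • Λ
        = (s : ℂ) • (Complex.ofReal ∘ (s⁻¹ • ξ) + Complex.I • 1 + (τ / s) • Λ) by
          ext i
          simp only [Pi.add_apply, Function.comp_apply, Pi.smul_apply, Pi.one_apply, smul_eq_mul,
            mul_one, Complex.ofReal_mul, Complex.ofReal_inv, Λ]
          field_simp,
      esymVec_smul] at hτ
    have := im_neg_of_esymVec_add_I_smul_one_add_smul_eq_zero hk hlam (s⁻¹ • ξ)
      ((mul_eq_zero.mp hτ).resolve_left (pow_ne_zero k hs'))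
    rw [Complex.div_ofReal_im, div_neg_iff] at this
    exact this.elim (fun h => absurd h.2 (not_lt.mpr (Set.mem_Ioi.mp hs).le)) (fun h => h.1.le)
  have hfcont : Continuous f := ((continuous_esymVec k).comp (by fun_prop :
    Continuous fun s : ℝ => Complex.ofReal ∘ ξ + ((s : ℂ) * Complex.I) • (1 : ι → ℂ) + z • Λ)).norm
  have hlim := ge_of_tendsto ((hfcont.tendsto 0).mono_left nhdsWithin_le_nhds)
    (eventually_nhdsWithin_of_forall hbound)
  have hf0 : f 0 = 0 := by simp [f, hz]
  have : 0 < ‖esymVec k Λ‖ * z.im ^ k := by positivity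
  linarith

theorem splits_esymLine {k : ℕ} (hk : k ≤ Fintype.card ι) {lam : ι → ℝ}
    (hlam : ∀ m ≤ k, 0 < esymVec m lam) (ξ : ι → ℝ) : (esymLine k ξ lam).Splits := by
  refine Splits.of_splits_map Complex.ofRealHom (IsAlgClosed.splits _) fun z hz => ?_
  have hroot : esymVec k (Complex.ofReal ∘ ξ + z • (Complex.ofReal ∘ lam)) = 0 := by
    have := isRoot_of_mem_roots hz
    rwa [IsRoot, map_esymLine, eval_esymLine] at this
  have hconj : esymVec k (Complex.ofReal ∘ ξ + (starRingEnd ℂ z) • (Complex.ofReal ∘ lam)) = 0 := by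
    have := congrArg (starRingEnd ℂ) hroot
    rw [map_esymVec, map_zero] at this
    rw [← this]
    congr 1
    ext i
    simp
  have h1 := not_im_pos_of_esymVec_add_smul_eq_zero hk hlam ξ hroot
  have h2 := not_im_pos_of_esymVec_add_smul_eq_zero hk hlam ξ hconj
  rw [Complex.conj_im] at h2
  exact ⟨z.re, Complex.ext rfl (by simp; linarith)⟩

end Hyperbolicity

theorem Multiset.esymm_one_eq_sum {R : Type*} [CommRing R] (s : Multiset R) :
    s.esymm 1 = s.sum := by
  simp [Multiset.esymm, Multiset.powersetCard_one]

theorem Multiset.two_mul_esymm_two {R : Type*} [CommRing R] (s : Multiset R) :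
    2 * s.esymm 2 = s.sum ^ 2 - (s.map (· ^ 2)).sum := by
  induction s using Multiset.induction_on with
  | empty => simp [Multiset.esymm, Multiset.powersetCard_zero_right]
  | cons a s ih =>
    have hcons : (a ::ₘ s).esymm 2 = s.esymm 2 + a * s.sum := by
      rw [Multiset.esymm, Multiset.powersetCard_cons, Multiset.map_add, Multiset.sum_add]
      congr 1
      simpa [Multiset.powersetCard_one] using Multiset.sum_map_mul_left (s := s) (f := id) (a := a)
    rw [hcons, Multiset.sum_cons, Multiset.map_cons, Multiset.sum_cons]
    linear_combination ih

theorem Multiset.sq_sum_le_card_mul_sum_sq (s : Multiset ℝ) :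
    s.sum ^ 2 ≤ Multiset.card s * (s.map (· ^ 2)).sum := by
  obtain ⟨l, rfl⟩ := Quot.exists_rep s
  have hl : (Quot.mk _ l : Multiset ℝ) = univ.val.map l.get := by
    rw [Fin.univ_val_map, List.ofFn_get]
    rfl
  rw [hl, Multiset.map_map, Finset.sum_map_val, Finset.sum_map_val, Multiset.card_map,
    Finset.card_val]
  exact _root_.sq_sum_le_card_mul_sum_sq

theorem Polynomial.Splits.two_mul_leadingCoeff_mul_coeff_le {p : ℝ[X]} (hp : p.Splits)
    (hk : 2 ≤ p.natDegree) :
    2 * p.leadingCoeff * p.coeff (p.natDegree - 2)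
      ≤ (1 - 1 / p.natDegree) * p.coeff (p.natDegree - 1) ^ 2 := by
  set k := p.natDegree
  set c := p.leadingCoeff
  set r := p.roots
  have hcard : Multiset.card r = k := hp.natDegree_eq_card_roots.symm
  have hcoeff : ∀ j ≤ k, p.coeff j = c * ((-1) ^ (k - j) * r.esymm (k - j)) := by
    intro j hj
    conv_lhs => rw [hp.eq_prod_roots]
    rw [coeff_C_mul, Multiset.prod_X_sub_C_coeff r (hcard ▸ hj), hcard]
  have h1 : p.coeff (k - 1) = -(c * r.sum) := by
    rw [hcoeff _ (Nat.sub_le k 1), show k - (k - 1) = 1 by omega, r.esymm_one_eq_sum]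
    ring
  have h2 : 2 * p.coeff (k - 2) = c * (r.sum ^ 2 - (r.map (· ^ 2)).sum) := by
    rw [hcoeff _ (Nat.sub_le k 2), show k - (k - 2) = 2 by omega, ← r.two_mul_esymm_two]
    ring
  have hk0 : (0 : ℝ) < k := by exact_mod_cast (by omega : 0 < k)
  have hcs : r.sum ^ 2 - (r.map (· ^ 2)).sum ≤ (1 - 1 / k) * r.sum ^ 2 := by
    have := r.sq_sum_le_card_mul_sum_sq
    rw [hcard] at this
    rw [one_sub_mul, one_div_mul_eq_div, sub_le_sub_iff_left, div_le_iff₀ hk0]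
    linarith
  calc 2 * c * p.coeff (k - 2) = c ^ 2 * (r.sum ^ 2 - (r.map (· ^ 2)).sum) := by
        rw [mul_comm 2 c, mul_assoc, h2]
        ring
    _ ≤ c ^ 2 * ((1 - 1 / k) * r.sum ^ 2) := mul_le_mul_of_nonneg_left hcs (sq_nonneg c)
    _ = (1 - 1 / k) * p.coeff (k - 1) ^ 2 := by
        rw [h1]
        ring

theorem esymVec_pos_of_mem_GCone {n k : ℕ} {lam : Fin n → ℝ} (hlam : lam ∈ GCone n k) :
    ∀ m ≤ k, 0 < esymVec m lam := by
  intro m hm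
  rcases Nat.eq_zero_or_pos m with rfl | hm0
  · simp [esymVec_zero]
  · exact hlam m hm0 hm

/-- **Concavity of `σ_k^{1/k}` (diagonal quadratic form inequality).** For `2 ≤ k ≤ n`,
`λ ∈ Γ_k` and any `ξ ∈ ℝ^n`:
`Σ_{i≠j} σ_{k-2;ij}(λ) ξ_i ξ_j ≤ (1 - 1/k) (Σ_i σ_{k-1;i}(λ) ξ_i)² / σ_k(λ)`. -/
theorem stmt9 (n k : ℕ) (hk : 2 ≤ k) (hkn : k ≤ n)
    (lam ξ : Fin n → ℝ) (hlam : lam ∈ GCone n k) :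
    ∑ i, ∑ j ∈ Finset.univ.erase i, esymOff2 n (k - 2) lam i j * ξ i * ξ j
      ≤ (1 - 1 / (k : ℝ)) * (∑ i, esymOff n (k - 1) lam i * ξ i) ^ 2 / esym n k lam := by
  have hpos := esymVec_pos_of_mem_GCone hlam
  have hσ : 0 < esym n k lam := hpos k le_rfl
  have hsplit := splits_esymLine (by simpa using hkn) hpos ξ
  have hdeg : (esymLine k ξ lam).natDegree = k := natDegree_esymLine ξ hσ.ne'
  have hnewton := hsplit.two_mul_leadingCoeff_mul_coeff_le (by rw [hdeg]; exact hk)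
  rw [hdeg, leadingCoeff_esymLine ξ hσ.ne', mul_comm 2, mul_assoc,
    two_mul_coeff_esymLine_sub_two n k hk, coeff_esymLine_sub_one n k (by omega)] at hnewton
  rw [le_div_iff₀ hσ, mul_comm]
  exact hnewton
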